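/- Let K be an origin-symmetric planar convex body. Define φ on A(K) \ E(K) by letting φ(x) be the first point y in the positive (counterclockwise) direction along ∂K from x such that x ⊣ y and y ⊣ x. Then for every y ∈ ∂K, the fiber φ⁻¹({y}) has at most two elements, and φ is a Borel measurable map. -/

import Mathlib

open Set MeasureTheory Pointwise

abbrev Plane := ℝ × ℝ

/-- An origin-symmetric convex body in the plane: compact, convex,
nonempty interior, symmetric about the origin. -/
def IsSymmConvexBody (K : Set Plane) : Prop :=
  Convex ℝ K ∧ IsCompact K ∧ (interior K).Nonempty ∧ K = -K

/-- Birkhoff orthogonality with respect to the norm induced by `K`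
(whose Minkowski functional is `gauge K`). -/
def BOrth (K : Set Plane) (x y : Plane) : Prop :=
  ∀ t : ℝ, gauge K x ≤ gauge K (x + t • y)

/-- The set of Auerbach points of `K`. -/
def Auerbach (K : Set Plane) : Set Plane :=
  {x | x ∈ frontier K ∧ ∃ y ∈ frontier K, BOrth K x y ∧ BOrth K y x}

/-- `E(K)`: the union of the open non-degenerate segments contained in `∂K`. -/
def SegUnion (K : Set Plane) : Set Plane :=
  {x | ∃ a b : Plane, a ≠ b ∧ segment ℝ a b ⊆ frontier K ∧ x ∈ openSegment ℝ a b}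

/-- A closed antipode-free arc of `∂K` with endpoints `x` and `y`:
a closed connected subset of `∂K` containing `x` and `y`, containing no
pair of antipodal points, and minimal with these properties. -/
def IsBArc (K C : Set Plane) (x y : Plane) : Prop :=
  C ⊆ frontier K ∧ IsClosed C ∧ IsPreconnected C ∧ x ∈ C ∧ y ∈ C ∧
  (∀ z ∈ C, -z ∉ C) ∧
  ∀ C' ⊆ C, IsClosed C' → IsPreconnected C' → x ∈ C' → y ∈ C' → C' = C

/-- An angular measure on `∂K`. -/
def IsAngularMeasure (K : Set Plane) (μ : Measure Plane) : Prop :=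
  μ (frontier K) = ENNReal.ofReal (2 * Real.pi) ∧
  μ (frontier K)ᶜ = 0 ∧
  (∀ X : Set Plane, μ (-X) = μ X) ∧
  (∀ x : Plane, μ {x} = 0)

/-- A B-measure: an angular measure giving `π/2` to every closed
antipode-free arc whose endpoints are Birkhoff orthogonal. -/
def IsBMeasure (K : Set Plane) (μ : Measure Plane) : Prop :=
  IsAngularMeasure K μ ∧
  ∀ C x y, IsBArc K C x y → BOrth K x y → μ C = ENNReal.ofReal (Real.pi / 2)

/-- The support of a Borel measure: the points all of whose open
neighborhoods have positive measure. -/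
def msupp {α : Type*} [TopologicalSpace α] [MeasurableSpace α]
    (μ : Measure α) : Set α :=
  {x | ∀ U : Set α, IsOpen U → x ∈ U → 0 < μ U}

/-- The point of `∂K` at polar angle `θ`. -/
noncomputable def bpt (K : Set Plane) (θ : ℝ) : Plane :=
  (gauge K (Real.cos θ, Real.sin θ))⁻¹ • ((Real.cos θ, Real.sin θ) : Plane)

/-- `y` is a mutually Birkhoff orthogonal boundary partner of `x`. -/
def Mut (K : Set Plane) (x y : Plane) : Prop :=
  y ∈ frontier K ∧ BOrth K x y ∧ BOrth K y x

/-!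
Write `x = bpt K θ`. Then `φ x = bpt K (firstPartnerAngle K θ)`, where
`firstPartnerAngle K θ` is the first angle after `θ` whose boundary point is mutually Birkhoff
orthogonal to `x`.

Fibers: if `φ x = y` then `x ⊣ y`, so the line `x + ℝ y` supports `K`. As `K = -K`, `K` lies
between the supporting lines through `x` and `-x`, so `|det (x, y)|` is the same for all such `x`:
the fiber lies on the two supporting lines parallel to `y`. Such a line meets `K` in a segment of
`∂K`, of which only the two endpoints can avoid `E(K)`. Finally `φ (-x) = -φ x ≠ φ x`, so the
fiber contains no antipodal pair, and folding one line onto the other by `x ↦ -x` is injective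
on it.

Measurability: the pairs of angles `(θ, t)` with `bpt K θ`, `bpt K t` mutually orthogonal form a
closed set, so by compactness `{θ | firstPartnerAngle K θ ≤ c}` is closed up to the region where
no partner exists. Hence `firstPartnerAngle K` is Borel, and
`φ = bpt K ∘ firstPartnerAngle K ∘ polarAngle` on `A(K) \ E(K)`.
-/

noncomputable def polarAngle (x : Plane) : ℝ := Complex.arg (Complex.equivRealProd.symm x)

lemma measurable_polarAngle : Measurable polarAngle :=
  Complex.measurable_arg.comp Complex.equivRealProdCLM.symm.continuous.measurable

namespace IsSymmConvexBody

variable {K : Set Plane}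

lemma zero_mem_interior (hK : IsSymmConvexBody K) : (0 : Plane) ∈ interior K := by
  obtain ⟨hconv, -, ⟨z, hz⟩, hsymm⟩ := hK
  have hneg : -z ∈ interior K :=
    interior_maximal (fun w hw => by rw [hsymm]; exact Set.mem_neg.2 (interior_subset hw))
      isOpen_interior.neg (Set.neg_mem_neg.2 hz)
  simpa using hconv.interior hz hneg (by norm_num : (0 : ℝ) ≤ 1 / 2)
    (by norm_num : (0 : ℝ) ≤ 1 / 2) (by norm_num)

lemma mem_nhds_zero (hK : IsSymmConvexBody K) : K ∈ nhds (0 : Plane) :=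
  mem_interior_iff_mem_nhds.1 hK.zero_mem_interior

lemma continuous_gauge (hK : IsSymmConvexBody K) : Continuous (gauge K) :=
  _root_.continuous_gauge hK.1 hK.mem_nhds_zero

lemma gauge_eq_one_iff (hK : IsSymmConvexBody K) {x : Plane} :
    gauge K x = 1 ↔ x ∈ frontier K :=
  gauge_eq_one_iff_mem_frontier hK.1 hK.mem_nhds_zero

lemma gauge_le_one_iff (hK : IsSymmConvexBody K) {x : Plane} : gauge K x ≤ 1 ↔ x ∈ K := by
  rw [gauge_le_one_iff_mem_closure hK.1 hK.mem_nhds_zero, hK.2.1.isClosed.closure_eq]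

lemma neg_mem (hK : IsSymmConvexBody K) {x : Plane} (hx : x ∈ K) : -x ∈ K := by
  rwa [hK.2.2.2, Set.mem_neg, neg_neg]

lemma gauge_neg (hK : IsSymmConvexBody K) (x : Plane) : gauge K (-x) = gauge K x :=
  _root_.gauge_neg (fun _ => hK.neg_mem) x

lemma gauge_pos (hK : IsSymmConvexBody K) {x : Plane} (hx : x ≠ 0) : 0 < gauge K x :=
  (_root_.gauge_pos (absorbent_nhds_zero hK.mem_nhds_zero)
    (NormedSpace.isVonNBounded_of_isBounded _ hK.2.1.isBounded)).2 hx

lemma neg_mem_frontier (hK : IsSymmConvexBody K) {x : Plane} (hx : x ∈ frontier K) :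
    -x ∈ frontier K := by
  rwa [← hK.gauge_eq_one_iff, hK.gauge_neg, hK.gauge_eq_one_iff]

lemma ne_zero_of_mem_frontier (hK : IsSymmConvexBody K) {x : Plane} (hx : x ∈ frontier K) :
    x ≠ 0 := by
  rintro rfl
  simp [← hK.gauge_eq_one_iff] at hx

lemma neg_mem_segUnion (hK : IsSymmConvexBody K) {x : Plane} (hx : x ∈ SegUnion K) :
    -x ∈ SegUnion K := by
  obtain ⟨a, b, hab, hseg, hx⟩ := hx
  let f : Plane →ᵃ[ℝ] Plane := (-LinearMap.id : Plane →ₗ[ℝ] Plane).toAffineMap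
  have hf (p : Plane) : -p = f p := rfl
  refine ⟨-a, -b, neg_injective.ne hab, ?_, ?_⟩
  · rw [hf a, hf b, ← image_segment]
    rintro _ ⟨z, hz, rfl⟩
    exact hK.neg_mem_frontier (hseg hz)
  · rw [hf a, hf b, hf x, ← image_openSegment]
    exact mem_image_of_mem f hx

lemma gauge_cos_sin_pos (hK : IsSymmConvexBody K) (θ : ℝ) :
    0 < gauge K (Real.cos θ, Real.sin θ) :=
  hK.gauge_pos fun h => by
    have := Real.sin_sq_add_cos_sq θ
    simp_all [Prod.ext_iff]

lemma gauge_bpt (hK : IsSymmConvexBody K) (θ : ℝ) : gauge K (bpt K θ) = 1 := by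
  have hpos := hK.gauge_cos_sin_pos θ
  rw [bpt, gauge_smul_of_nonneg (inv_nonneg.2 hpos.le), smul_eq_mul, inv_mul_cancel₀ hpos.ne']

lemma bpt_mem_frontier (hK : IsSymmConvexBody K) (θ : ℝ) : bpt K θ ∈ frontier K :=
  hK.gauge_eq_one_iff.1 (hK.gauge_bpt θ)

lemma continuous_bpt (hK : IsSymmConvexBody K) : Continuous (bpt K) := by
  have hu : Continuous fun θ : ℝ => ((Real.cos θ, Real.sin θ) : Plane) := by fun_prop
  exact ((hK.continuous_gauge.comp hu).inv₀ fun θ => (hK.gauge_cos_sin_pos θ).ne').smul hu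

lemma bpt_antiperiodic (hK : IsSymmConvexBody K) : Function.Antiperiodic (bpt K) Real.pi := by
  intro θ
  have hu : ((Real.cos (θ + Real.pi), Real.sin (θ + Real.pi)) : Plane) =
      -(Real.cos θ, Real.sin θ) := by
    simp [Real.cos_add_pi, Real.sin_add_pi]
  rw [bpt, bpt, hu, hK.gauge_neg, smul_neg]

lemma bpt_polarAngle (hK : IsSymmConvexBody K) {x : Plane} (hx : x ∈ frontier K) :
    bpt K (polarAngle x) = x := by
  set z := Complex.equivRealProd.symm x
  have hz : z ≠ 0 := fun h =>
    hK.ne_zero_of_mem_frontier hx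
      (by simpa [z, Prod.ext_iff] using congrArg Complex.equivRealProd h)
  have hu : ((Real.cos (polarAngle x), Real.sin (polarAngle x)) : Plane) = ‖z‖⁻¹ • x := by
    rw [polarAngle, Complex.cos_arg hz, Complex.sin_arg]
    ext <;> simp [z, div_eq_inv_mul]
  have hnorm : 0 < ‖z‖ := norm_pos_iff.2 hz
  rw [bpt, hu, gauge_smul_of_nonneg (inv_nonneg.2 hnorm.le), hK.gauge_eq_one_iff.2 hx,
    smul_eq_mul, mul_one, inv_inv, smul_smul, mul_inv_cancel₀ hnorm.ne', one_smul]

end IsSymmConvexBody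

section Orthogonality

variable {K : Set Plane} {x y : Plane}

lemma BOrth.neg_left (hK : IsSymmConvexBody K) (h : BOrth K x y) : BOrth K (-x) y := fun t => by
  have hrw : -x + t • y = -(x + (-t) • y) := by module
  rw [hrw, hK.gauge_neg, hK.gauge_neg]
  exact h (-t)

lemma BOrth.neg_right (h : BOrth K x y) : BOrth K x (-y) := fun t => by
  simpa using h (-t)

lemma not_bOrth_self (hx : gauge K x ≠ 0) : ¬ BOrth K x x := fun h => by
  have := h (-1)
  simp only [neg_smul, one_smul, add_neg_cancel, gauge_zero] at this
  exact hx (le_antisymm this (gauge_nonneg x))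

lemma Mut.neg (hK : IsSymmConvexBody K) (h : Mut K x y) : Mut K (-x) (-y) :=
  ⟨hK.neg_mem_frontier h.1, (h.2.1.neg_left hK).neg_right, (h.2.2.neg_left hK).neg_right⟩

lemma mut_neg_iff (hK : IsSymmConvexBody K) : Mut K (-x) (-y) ↔ Mut K x y :=
  ⟨fun h => by simpa using h.neg hK, fun h => h.neg hK⟩

lemma neg_mem_auerbach_diff_segUnion (hK : IsSymmConvexBody K)
    (hx : x ∈ Auerbach K \ SegUnion K) : -x ∈ Auerbach K \ SegUnion K := by
  obtain ⟨⟨hxf, w, hw, hxw, hwx⟩, hxE⟩ := hx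
  refine ⟨⟨hK.neg_mem_frontier hxf, w, hw, hxw.neg_left hK, hwx.neg_right⟩, fun h => hxE ?_⟩
  simpa using hK.neg_mem_segUnion h

lemma IsSymmConvexBody.isClosed_setOf_mut_bpt (hK : IsSymmConvexBody K) :
    IsClosed {p : ℝ × ℝ | Mut K (bpt K p.1) (bpt K p.2)} := by
  have hb₁ : Continuous fun p : ℝ × ℝ => bpt K p.1 := hK.continuous_bpt.comp continuous_fst
  have hb₂ : Continuous fun p : ℝ × ℝ => bpt K p.2 := hK.continuous_bpt.comp continuous_snd
  have heq : {p : ℝ × ℝ | Mut K (bpt K p.1) (bpt K p.2)} =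
      (⋂ s : ℝ, {p | 1 ≤ gauge K (bpt K p.1 + s • bpt K p.2)}) ∩
        ⋂ s : ℝ, {p | 1 ≤ gauge K (bpt K p.2 + s • bpt K p.1)} := by
    ext p
    simp [Mut, BOrth, hK.gauge_bpt, hK.bpt_mem_frontier]
  rw [heq]
  exact (isClosed_iInter fun s => isClosed_le continuous_const
      (hK.continuous_gauge.comp (hb₁.add (hb₂.const_smul s)))).inter
    (isClosed_iInter fun s => isClosed_le continuous_const
      (hK.continuous_gauge.comp (hb₂.add (hb₁.const_smul s))))

end Orthogonality

def partnerAngles (K : Set Plane) (θ : ℝ) : Set ℝ :=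
  {t | θ < t ∧ Mut K (bpt K θ) (bpt K t)}

noncomputable def firstPartnerAngle (K : Set Plane) (θ : ℝ) : ℝ := sInf (partnerAngles K θ)

section PartnerAngles

variable {K : Set Plane} {θ t : ℝ}

lemma bddBelow_partnerAngles : BddBelow (partnerAngles K θ) := ⟨θ, fun _ ht => ht.1.le⟩

lemma mem_partnerAngles_of_le (hK : IsSymmConvexBody K) (hθt : θ ≤ t)
    (h : Mut K (bpt K θ) (bpt K t)) : t ∈ partnerAngles K θ := by
  refine ⟨hθt.lt_of_ne ?_, h⟩
  rintro rfl
  exact not_bOrth_self (by simp [hK.gauge_bpt]) h.2.1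

lemma exists_mem_Ioc_mut (hK : IsSymmConvexBody K) (h : Mut K (bpt K θ) (bpt K t)) :
    ∃ s ∈ Ioc θ (θ + 2 * Real.pi), Mut K (bpt K θ) (bpt K s) := by
  refine ⟨toIocMod Real.two_pi_pos θ t, toIocMod_mem_Ioc _ _ _, ?_⟩
  rwa [toIocMod, hK.bpt_antiperiodic.periodic_two_mul.sub_zsmul_eq]

lemma partnerAngles_nonempty_iff (hK : IsSymmConvexBody K) :
    (partnerAngles K θ).Nonempty ↔
      ∃ t ∈ Icc θ (θ + 2 * Real.pi), Mut K (bpt K θ) (bpt K t) := by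
  constructor
  · rintro ⟨t, -, h⟩
    obtain ⟨s, hs, h'⟩ := exists_mem_Ioc_mut hK h
    exact ⟨s, Ioc_subset_Icc_self hs, h'⟩
  · rintro ⟨t, ht, h⟩
    exact ⟨t, mem_partnerAngles_of_le hK ht.1 h⟩

lemma partnerAngles_nonempty_of_mem_auerbach (hK : IsSymmConvexBody K)
    (h : bpt K θ ∈ Auerbach K) : (partnerAngles K θ).Nonempty := by
  obtain ⟨-, w, hw, h₁, h₂⟩ := h
  obtain ⟨s, hs, h'⟩ := exists_mem_Ioc_mut hK (θ := θ) (t := polarAngle w)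
    (by rw [hK.bpt_polarAngle hw]; exact ⟨hw, h₁, h₂⟩)
  exact ⟨s, hs.1, h'⟩

lemma firstPartnerAngle_mem (hK : IsSymmConvexBody K) (hne : (partnerAngles K θ).Nonempty) :
    firstPartnerAngle K θ ∈ partnerAngles K θ := by
  have hsub : partnerAngles K θ ⊆ {t | θ ≤ t ∧ Mut K (bpt K θ) (bpt K t)} :=
    fun t ht => ⟨ht.1.le, ht.2⟩
  have hclosed : IsClosed {t | θ ≤ t ∧ Mut K (bpt K θ) (bpt K t)} :=
    isClosed_Ici.inter (hK.isClosed_setOf_mut_bpt.preimage (Continuous.prodMk_right θ))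
  obtain ⟨hle, h⟩ :=
    closure_minimal hsub hclosed (csInf_mem_closure hne bddBelow_partnerAngles)
  exact mem_partnerAngles_of_le hK hle h

lemma add_pi_mem_partnerAngles_add_pi_iff (hK : IsSymmConvexBody K) :
    t + Real.pi ∈ partnerAngles K (θ + Real.pi) ↔ t ∈ partnerAngles K θ := by
  simp [partnerAngles, hK.bpt_antiperiodic _, mut_neg_iff hK]

lemma partnerAngles_add_pi (hK : IsSymmConvexBody K) :
    partnerAngles K (θ + Real.pi) = (· + Real.pi) '' partnerAngles K θ := by
  ext t
  constructor
  · intro ht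
    refine ⟨t - Real.pi, ?_, sub_add_cancel t Real.pi⟩
    rwa [← add_pi_mem_partnerAngles_add_pi_iff hK, sub_add_cancel]
  · rintro ⟨s, hs, rfl⟩
    exact (add_pi_mem_partnerAngles_add_pi_iff hK).2 hs

lemma firstPartnerAngle_add_pi (hK : IsSymmConvexBody K) (hne : (partnerAngles K θ).Nonempty) :
    firstPartnerAngle K (θ + Real.pi) = firstPartnerAngle K θ + Real.pi := by
  rw [firstPartnerAngle, partnerAngles_add_pi hK]
  exact ((OrderIso.addRight Real.pi).map_csInf' hne bddBelow_partnerAngles).symm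

end PartnerAngles

lemma isClosed_setOf_exists_mem_Icc {C : Set (ℝ × ℝ)} (hC : IsClosed C) {f : ℝ → ℝ}
    (hf : Continuous f) : IsClosed {θ | ∃ t ∈ Icc θ (f θ), (θ, t) ∈ C} := by
  refine IsSeqClosed.isClosed fun u θ hu hlim => ?_
  choose t ht htC using hu
  obtain ⟨m, hm⟩ := hlim.bddBelow_range
  have hflim := (hf.tendsto θ).comp hlim
  obtain ⟨M, hM⟩ := hflim.bddAbove_range
  have htIcc (n : ℕ) : t n ∈ Icc m M :=
    ⟨(hm (mem_range_self n)).trans (ht n).1, (ht n).2.trans (hM (mem_range_self n))⟩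
  obtain ⟨t₀, -, ψ, hψ, htlim⟩ := isCompact_Icc.tendsto_subseq htIcc
  have hulim := hlim.comp hψ.tendsto_atTop
  refine ⟨t₀, ⟨le_of_tendsto_of_tendsto' hulim htlim fun n => (ht (ψ n)).1,
    le_of_tendsto_of_tendsto' htlim (hflim.comp hψ.tendsto_atTop) fun n => (ht (ψ n)).2⟩, ?_⟩
  exact hC.mem_of_tendsto (hulim.prodMk_nhds htlim)
    (Filter.Eventually.of_forall fun n => htC (ψ n))

namespace IsSymmConvexBody

variable {K : Set Plane}

lemma isClosed_setOf_partnerAngles_nonempty (hK : IsSymmConvexBody K) :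
    IsClosed {θ | (partnerAngles K θ).Nonempty} := by
  simp_rw [partnerAngles_nonempty_iff hK]
  exact isClosed_setOf_exists_mem_Icc hK.isClosed_setOf_mut_bpt (by fun_prop)

-- The second alternative is the junk value `sInf ∅ = 0`.
lemma firstPartnerAngle_le_iff (hK : IsSymmConvexBody K) {θ c : ℝ} :
    firstPartnerAngle K θ ≤ c ↔
      (∃ t ∈ Icc θ c, Mut K (bpt K θ) (bpt K t)) ∨
        (¬ (partnerAngles K θ).Nonempty ∧ 0 ≤ c) := by
  by_cases hne : (partnerAngles K θ).Nonempty
  · have hmem := firstPartnerAngle_mem hK hne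
    simp only [hne, not_true_eq_false, false_and, or_false]
    refine ⟨fun h => ⟨_, ⟨hmem.1.le, h⟩, hmem.2⟩, fun ⟨t, ht, h⟩ => ?_⟩
    exact (csInf_le bddBelow_partnerAngles (mem_partnerAngles_of_le hK ht.1 h)).trans ht.2
  · have hzero : firstPartnerAngle K θ = 0 := by
      rw [firstPartnerAngle, not_nonempty_iff_eq_empty.1 hne, Real.sInf_empty]
    have hnone : ¬ ∃ t ∈ Icc θ c, Mut K (bpt K θ) (bpt K t) :=
      fun ⟨t, ht, h⟩ => hne ⟨t, mem_partnerAngles_of_le hK ht.1 h⟩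
    rw [hzero, eq_false hnone, eq_false hne]
    simp

lemma measurable_firstPartnerAngle (hK : IsSymmConvexBody K) :
    Measurable (firstPartnerAngle K) := by
  refine measurable_of_Iic fun c => ?_
  have heq : firstPartnerAngle K ⁻¹' Iic c =
      {θ | ∃ t ∈ Icc θ c, Mut K (bpt K θ) (bpt K t)} ∪
        ({θ | (partnerAngles K θ).Nonempty}ᶜ ∩ {_θ | 0 ≤ c}) :=
    Set.ext fun θ => hK.firstPartnerAngle_le_iff
  rw [heq]
  have hclosed := isClosed_setOf_exists_mem_Icc hK.isClosed_setOf_mut_bpt (f := fun _ => c)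
    continuous_const
  exact hclosed.measurableSet.union
    (hK.isClosed_setOf_partnerAngles_nonempty.measurableSet.compl.inter (MeasurableSet.const _))

end IsSymmConvexBody

def wedge (y : Plane) : Plane →ₗ[ℝ] ℝ :=
  y.2 • LinearMap.fst ℝ ℝ ℝ - y.1 • LinearMap.snd ℝ ℝ ℝ

lemma wedge_apply (y v : Plane) : wedge y v = y.2 * v.1 - y.1 * v.2 := rfl

lemma exists_eq_add_smul_of_wedge_eq {y v w : Plane} (hy : y ≠ 0) (h : wedge y v = wedge y w) :
    ∃ s : ℝ, v = w + s • y := by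
  have hn : y.1 ^ 2 + y.2 ^ 2 ≠ 0 := by
    contrapose! hy
    obtain ⟨h₁, h₂⟩ := (add_eq_zero_iff_of_nonneg (sq_nonneg _) (sq_nonneg _)).1 hy
    exact Prod.ext (pow_eq_zero_iff two_ne_zero |>.1 h₁) (pow_eq_zero_iff two_ne_zero |>.1 h₂)
  rw [wedge_apply, wedge_apply] at h
  refine ⟨((v.1 - w.1) * y.1 + (v.2 - w.2) * y.2) / (y.1 ^ 2 + y.2 ^ 2), Prod.ext ?_ ?_⟩ <;>
    simp only [Prod.fst_add, Prod.snd_add, Prod.smul_fst, Prod.smul_snd, smul_eq_mul] <;>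
    field_simp
  · linear_combination y.2 * h
  · linear_combination -y.1 * h

section SupportLines

variable {K : Set Plane} {x y z : Plane}

lemma one_le_gauge_of_wedge_eq (hy : y ≠ 0) (hx : gauge K x = 1) (hxy : BOrth K x y)
    (hz : wedge y z = wedge y x) : 1 ≤ gauge K z := by
  obtain ⟨s, rfl⟩ := exists_eq_add_smul_of_wedge_eq hy hz
  exact hx ▸ hxy s

lemma wedge_le_abs_wedge_of_bOrth (hK : IsSymmConvexBody K) (hy : y ≠ 0) (hx : gauge K x = 1)
    (hxy : BOrth K x y) (hz : z ∈ K) : wedge y z ≤ |wedge y x| := by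
  wlog hpos : 0 ≤ wedge y x generalizing x
  · simpa using this (x := -x) (by rwa [hK.gauge_neg]) (hxy.neg_left hK) (by simp; linarith)
  rw [abs_of_nonneg hpos]
  by_contra! hlt
  have hzpos : 0 < wedge y z := hpos.trans_lt hlt
  set t := wedge y x / wedge y z
  have ht₀ : 0 ≤ t := div_nonneg hpos hzpos.le
  have ht₁ : t < 1 := (div_lt_one hzpos).2 hlt
  have hline : wedge y (t • z) = wedge y x := by
    rw [map_smul, smul_eq_mul, div_mul_cancel₀ _ hzpos.ne']
  have hge := one_le_gauge_of_wedge_eq hy hx hxy hline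
  rw [gauge_smul_of_nonneg ht₀, smul_eq_mul] at hge
  linarith [mul_le_of_le_one_right ht₀ (hK.gauge_le_one_iff.2 hz)]

lemma abs_wedge_eq_of_bOrth (hK : IsSymmConvexBody K) (hy : y ≠ 0) (hx : gauge K x = 1)
    (hxy : BOrth K x y) (hz : gauge K z = 1) (hzy : BOrth K z y) :
    |wedge y z| = |wedge y x| := by
  have habs_le {u v : Plane} (hu : gauge K u = 1) (huy : BOrth K u y) (hv : v ∈ K) :
      |wedge y v| ≤ |wedge y u| := by
    have := wedge_le_abs_wedge_of_bOrth hK hy hu huy (hK.neg_mem hv)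
    rw [map_neg] at this
    exact abs_le.2 ⟨by linarith, wedge_le_abs_wedge_of_bOrth hK hy hu huy hv⟩
  exact le_antisymm (habs_le hx hxy (hK.gauge_le_one_iff.1 hz.le))
    (habs_le hz hzy (hK.gauge_le_one_iff.1 hx.le))

lemma mem_segUnion_of_sbtw (hK : IsSymmConvexBody K) {a b c : Plane} (ha : a ∈ K) (hc : c ∈ K)
    (hac : ∀ z ∈ segment ℝ a c, 1 ≤ gauge K z) (h : Sbtw ℝ a b c) : b ∈ SegUnion K := by
  refine ⟨a, c, h.left_ne_right, fun z hz => hK.gauge_eq_one_iff.1 ?_, ?_⟩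
  · exact le_antisymm (hK.gauge_le_one_iff.2 (hK.1.segment_subset ha hc hz)) (hac z hz)
  · exact openSegment_eq_image_lineMap ℝ a c ▸ h.mem_image_Ioo

lemma encard_supportLine_diff_segUnion_le_two (hK : IsSymmConvexBody K) (hy : y ≠ 0)
    (hx : gauge K x = 1) (hxy : BOrth K x y) :
    ({z ∈ K | wedge y z = wedge y x} \ SegUnion K).encard ≤ 2 := by
  set L := {z ∈ K | wedge y z = wedge y x}
  have hnot_sbtw {a b c : Plane} (ha : a ∈ L) (hb : b ∈ L \ SegUnion K) (hc : c ∈ L) :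
      ¬ Sbtw ℝ a b c := by
    refine fun h => hb.2 (mem_segUnion_of_sbtw hK ha.1 hc.1 (fun z hz => ?_) h)
    have hconv : Convex ℝ (wedge y ⁻¹' {wedge y x}) := (convex_singleton _).linear_preimage _
    exact one_le_gauge_of_wedge_eq hy hx hxy (hconv.segment_subset ha.2 hc.2 hz)
  by_contra! h3
  obtain ⟨T, hT, hT3⟩ := exists_subset_encard_eq (Order.add_one_le_of_lt h3)
  obtain ⟨a, b, c, hab, hac, hbc, rfl⟩ := encard_eq_three.1 hT3
  have ha : a ∈ L \ SegUnion K := hT (by simp)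
  have hb : b ∈ L \ SegUnion K := hT (by simp)
  have hc : c ∈ L \ SegUnion K := hT (by simp)
  have hcol : Collinear ℝ {a, b, c} := by
    rw [collinear_iff_of_mem (mem_insert a _)]
    refine ⟨y, fun p hp => ?_⟩
    obtain ⟨s, hs⟩ := exists_eq_add_smul_of_wedge_eq hy ((hT hp).1.2.trans ha.1.2.symm)
    exact ⟨s, by rw [hs, vadd_eq_add, add_comm]⟩
  rcases hcol.wbtw_or_wbtw_or_wbtw with h | h | h
  · exact hnot_sbtw ha.1 hb hc.1 ⟨h, hab.symm, hbc⟩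
  · exact hnot_sbtw hb.1 hc ha.1 ⟨h, hbc.symm, hac.symm⟩
  · exact hnot_sbtw hc.1 ha hb.1 ⟨h, hac, hab⟩

end SupportLines

lemma Set.encard_le_encard_of_subset_union_neg {α : Type*} [InvolutiveNeg α] {F W : Set α}
    (hF : ∀ x ∈ F, -x ∉ F) (hFW : F ⊆ W ∪ -W) : F.encard ≤ W.encard := by
  classical
  refine encard_le_encard_of_injOn (f := fun x => if x ∈ W then x else -x)
    (fun x hx => ?_) (fun a ha b hb hab => ?_)
  · dsimp only
    split_ifs with h
    exacts [h, (hFW hx).resolve_left h]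
  · dsimp only at hab
    split_ifs at hab with ha' hb' hb'
    · exact hab
    · exact absurd (hab ▸ ha) (hF b hb)
    · exact absurd (hab ▸ hb) (hF a ha)
    · exact neg_injective hab

def IsFirstPartnerMap (K : Set Plane) (φ : Plane → Plane) : Prop :=
  ∀ θ : ℝ, bpt K θ ∈ Auerbach K \ SegUnion K →
    φ (bpt K θ) = bpt K (firstPartnerAngle K θ)

namespace IsFirstPartnerMap

variable {K : Set Plane} {φ : Plane → Plane} {x : Plane}

lemma apply_eq (hφ : IsFirstPartnerMap K φ) (hK : IsSymmConvexBody K)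
    (hx : x ∈ Auerbach K \ SegUnion K) : φ x = bpt K (firstPartnerAngle K (polarAngle x)) := by
  have hθ := hK.bpt_polarAngle hx.1.1
  have := hφ _ (hθ.symm ▸ hx)
  rwa [hθ] at this

lemma mut_apply (hφ : IsFirstPartnerMap K φ) (hK : IsSymmConvexBody K)
    (hx : x ∈ Auerbach K \ SegUnion K) : Mut K x (φ x) := by
  have hθ := hK.bpt_polarAngle hx.1.1
  have hne := partnerAngles_nonempty_of_mem_auerbach hK (hθ.symm ▸ hx.1)
  have := (firstPartnerAngle_mem hK hne).2
  rwa [hθ, ← hφ.apply_eq hK hx] at this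

lemma apply_neg (hφ : IsFirstPartnerMap K φ) (hK : IsSymmConvexBody K)
    (hx : x ∈ Auerbach K \ SegUnion K) : φ (-x) = -φ x := by
  set θ := polarAngle x
  have hθ : bpt K θ = x := hK.bpt_polarAngle hx.1.1
  have hθπ : bpt K (θ + Real.pi) = -x := by rw [hK.bpt_antiperiodic, hθ]
  have hne := partnerAngles_nonempty_of_mem_auerbach hK (hθ.symm ▸ hx.1)
  rw [← hθπ, hφ _ (hθπ ▸ neg_mem_auerbach_diff_segUnion hK hx),
    firstPartnerAngle_add_pi hK hne, hK.bpt_antiperiodic, hφ.apply_eq hK hx]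

lemma encard_fiber_le_two (hφ : IsFirstPartnerMap K φ) (hK : IsSymmConvexBody K) (y : Plane) :
    {x ∈ Auerbach K \ SegUnion K | φ x = y}.encard ≤ 2 := by
  set F := {x ∈ Auerbach K \ SegUnion K | φ x = y}
  rcases F.eq_empty_or_nonempty with hF | ⟨x₀, hx₀, rfl⟩
  · simp [hF]
  have hmut {x} (hx : x ∈ F) : Mut K x (φ x₀) := hx.2 ▸ hφ.mut_apply hK hx.1
  have hgauge {x} (hx : x ∈ F) : gauge K x = 1 := hK.gauge_eq_one_iff.2 hx.1.1.1
  have hx₀F : x₀ ∈ F := ⟨hx₀, rfl⟩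
  have hy : φ x₀ ≠ 0 := hK.ne_zero_of_mem_frontier (hmut hx₀F).1
  have hanti : ∀ x ∈ F, -x ∉ F := fun x hx hnx => by
    have h := hφ.apply_neg hK hx.1
    rw [hnx.2, hx.2] at h
    exact hy (self_eq_neg.1 h)
  set W := {z ∈ K | wedge (φ x₀) z = wedge (φ x₀) x₀} \ SegUnion K
  have hFW : F ⊆ W ∪ -W := by
    intro x hx
    have hxK : x ∈ K := hK.gauge_le_one_iff.1 (hgauge hx).le
    rcases abs_eq_abs.1 (abs_wedge_eq_of_bOrth hK hy (hgauge hx₀F) (hmut hx₀F).2.1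
      (hgauge hx) (hmut hx).2.1) with h | h
    · exact Or.inl ⟨⟨hxK, h⟩, hx.1.2⟩
    · refine Or.inr ⟨⟨hK.neg_mem hxK, by rw [map_neg, h, neg_neg]⟩, fun hneg => hx.1.2 ?_⟩
      simpa using hK.neg_mem_segUnion hneg
  calc F.encard ≤ W.encard := encard_le_encard_of_subset_union_neg hanti hFW
    _ ≤ 2 := encard_supportLine_diff_segUnion_le_two hK hy (hgauge hx₀F) (hmut hx₀F).2.1

lemma measurable_restrict (hφ : IsFirstPartnerMap K φ) (hK : IsSymmConvexBody K) :
    Measurable fun x : ↥(Auerbach K \ SegUnion K) => φ x := by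
  have heq : (fun x : ↥(Auerbach K \ SegUnion K) => φ x) =
      fun x : ↥(Auerbach K \ SegUnion K) => bpt K (firstPartnerAngle K (polarAngle x)) :=
    funext fun x => hφ.apply_eq hK x.2
  rw [heq]
  exact hK.continuous_bpt.measurable.comp
    (hK.measurable_firstPartnerAngle.comp (measurable_polarAngle.comp measurable_subtype_coe))

end IsFirstPartnerMap

/-- The map `φ` sending `x ∈ A(K) \ E(K)` to the first mutually Birkhoff
orthogonal point in the positive direction has fibers of at most two points
and is Borel measurable. -/
theorem stmt_18 (K : Set Plane) (hK : IsSymmConvexBody K)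
    (φ : Plane → Plane)
    (hφ : ∀ θ : ℝ, bpt K θ ∈ Auerbach K \ SegUnion K →
      φ (bpt K θ) = bpt K (sInf {t : ℝ | θ < t ∧ Mut K (bpt K θ) (bpt K t)})) :
    (∀ y : Plane, ∃ S : Finset Plane, S.card ≤ 2 ∧
      {x ∈ Auerbach K \ SegUnion K | φ x = y} ⊆ ↑S) ∧
    Measurable (fun x : (Auerbach K \ SegUnion K : Set Plane) => φ x.val) := by
  have hφ' : IsFirstPartnerMap K φ := hφ
  refine ⟨fun y => ?_, hφ'.measurable_restrict hK⟩
  obtain ⟨hfin, hcard⟩ := encard_le_coe_iff_finite_ncard_le.1 (hφ'.encard_fiber_le_two hK y)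
  exact ⟨hfin.toFinset, by rwa [← ncard_eq_toFinset_card _ hfin], by simp⟩
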